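/- The function f₂ satisfies f₂''(v) + π² * f₂(v) = 2*π*f₁(v) for every real v, together with the boundary values f₂(0) = 0 and f₂(1) = 0. -/

import Mathlib

open Real

/-- The first-order correction term `f₁(v) = (1−v)·cos(πv) − (1/(2π))·sin(πv)`. -/
noncomputable def f₁ (v : ℝ) : ℝ :=
  (1 - v) * Real.cos (π * v) - (1 / (2 * π)) * Real.sin (π * v)

/-- The second-order correction term
`f₂(v) = (−v²/2 + v − (1/2 + 3/(8π²)))·sin(πv)`. -/
noncomputable def f₂ (v : ℝ) : ℝ :=
  (-v ^ 2 / 2 + v - (1 / 2 + 3 / (8 * π ^ 2))) * Real.sin (π * v)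

/-! For an amplitude `p`, `(p · sin(ωx))'' + ω² p · sin(ωx) = p'' · sin(ωx) + 2ω p' · cos(ωx)`:
the `sin` factor is annihilated by `d²/dx² + ω²`, so only the terms in which `p` is
differentiated survive. With the quadratic amplitude of `f₂`, `p' = 1 - v` and `p'' = -1`,
which is `2π f₁`. -/

theorem hasDerivAt_sin_const_mul (ω x : ℝ) :
    HasDerivAt (fun x => sin (ω * x)) (ω * cos (ω * x)) x := by
  simpa [mul_comm] using ((hasDerivAt_id x).const_mul ω).sin

theorem hasDerivAt_cos_const_mul (ω x : ℝ) :
    HasDerivAt (fun x => cos (ω * x)) (-(ω * sin (ω * x))) x := by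
  simpa [mul_comm] using ((hasDerivAt_id x).const_mul ω).cos

theorem deriv_mul_sin_const_mul (ω : ℝ) {p p' : ℝ → ℝ} (hp : ∀ x, HasDerivAt p (p' x) x) :
    deriv (fun x => p x * sin (ω * x)) = fun x => p' x * sin (ω * x) + p x * (ω * cos (ω * x)) :=
  funext fun x => ((hp x).mul (hasDerivAt_sin_const_mul ω x)).deriv

theorem deriv_deriv_mul_sin_const_mul_add (ω : ℝ) {p p' : ℝ → ℝ} {p'' v : ℝ}
    (hp : ∀ x, HasDerivAt p (p' x) x) (hp' : HasDerivAt p' p'' v) :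
    deriv (deriv fun x => p x * sin (ω * x)) v + ω ^ 2 * (p v * sin (ω * v)) =
      p'' * sin (ω * v) + 2 * ω * p' v * cos (ω * v) := by
  rw [deriv_mul_sin_const_mul ω hp]
  have h : HasDerivAt (fun x => p' x * sin (ω * x) + p x * (ω * cos (ω * x))) _ v :=
    (hp'.mul (hasDerivAt_sin_const_mul ω v)).add
      ((hp v).mul ((hasDerivAt_cos_const_mul ω v).const_mul ω))
  rw [h.deriv]
  ring

/-- `f₂'' + π² f₂ = 2π f₁` on all of `ℝ`, with `f₂(0) = 0` and `f₂(1) = 0`. -/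
theorem f₂_ode_and_boundary :
    (∀ v : ℝ, deriv (deriv f₂) v + π ^ 2 * f₂ v = 2 * π * f₁ v) ∧
      f₂ 0 = 0 ∧ f₂ 1 = 0 := by
  refine ⟨fun v => ?_, by simp [f₂], by simp [f₂]⟩
  have hp : ∀ x : ℝ, HasDerivAt (fun x => -x ^ 2 / 2 + x - (1 / 2 + 3 / (8 * π ^ 2))) (1 - x) x :=
    fun x => ((((hasDerivAt_pow 2 x).neg.div_const 2).add (hasDerivAt_id x)).sub_const
      (1 / 2 + 3 / (8 * π ^ 2))).congr_deriv (by push_cast; ring)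
  have hp' : HasDerivAt (fun x : ℝ => 1 - x) (-1) v := by
    simpa using (hasDerivAt_id v).const_sub 1
  have hode : deriv (deriv f₂) v + π ^ 2 * f₂ v =
      -1 * sin (π * v) + 2 * π * (1 - v) * cos (π * v) :=
    deriv_deriv_mul_sin_const_mul_add π hp hp'
  rw [hode, f₁]
  field_simp
  ring
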